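/- arXiv:2310.11420 — 3 statements merged into one kernel-verified Lean document; each statement's English description precedes it below -/
import Mathlib

section
/- Let F_X and F_Y be real n×c matrices. If there exists a unique permutation matrix Π minimising the Frobenius objective ‖Π F_X − F_Y‖_F² over all n×n permutation matrices, then F_X has pairwise distinct rows. -/
open Matrix BigOperators

/-- A permutation matrix: a square 0–1 matrix with exactly one entry equal to 1
in each row and each column. -/
def IsPermMatrix {n : ℕ} (P : Matrix (Fin n) (Fin n) ℝ) : Prop :=
  (∀ i j, P i j = 0 ∨ P i j = 1) ∧ (∀ i, ∑ j, P i j = 1) ∧ (∀ j, ∑ i, P i j = 1)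

/-- Squared Frobenius norm. -/
def frobSq {m c : ℕ} (M : Matrix (Fin m) (Fin c) ℝ) : ℝ :=
  ∑ i, ∑ j, (M i j) ^ 2

/-
If rows `i ≠ j` of `F_X` coincide, then for any permutation matrix `Π` the matrix `Π'` obtained
by swapping columns `i` and `j` of `Π` is again a permutation matrix, different from `Π`, with
`Π' F_X = Π F_X`. So a minimiser is never unique.
-/

theorem Matrix.submatrix_swap_self_of_row_eq {m c α : Type*} [DecidableEq m] (F : Matrix m c α)
    {i j : m} (h : F i = F j) : F.submatrix (Equiv.swap i j) id = F := by
  ext a k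
  rcases eq_or_ne a i with rfl | hai
  · simp [h]
  rcases eq_or_ne a j with rfl | haj
  · simp [h]
  simp [Equiv.swap_apply_of_ne_of_ne hai haj]

namespace IsPermMatrix

variable {n : ℕ} {P : Matrix (Fin n) (Fin n) ℝ}

theorem submatrix_id (hP : IsPermMatrix P) (σ : Equiv.Perm (Fin n)) :
    IsPermMatrix (P.submatrix id σ) := by
  obtain ⟨h01, hrow, hcol⟩ := hP
  exact ⟨fun a b => h01 a (σ b), fun a => (Equiv.sum_comp σ (P a)).trans (hrow a),
    fun b => hcol (σ b)⟩

theorem nonneg (hP : IsPermMatrix P) (a b : Fin n) : 0 ≤ P a b := by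
  rcases hP.1 a b with h | h <;> simp [h]

theorem exists_apply_eq_one (hP : IsPermMatrix P) (j : Fin n) : ∃ a, P a j = 1 := by
  by_contra! hne
  have hzero : ∑ a, P a j = 0 :=
    Finset.sum_eq_zero fun a _ => (hP.1 a j).resolve_right (hne a)
  simp [hP.2.2 j] at hzero

theorem eq_of_apply_eq_one (hP : IsPermMatrix P) {a i j : Fin n} (hi : P a i = 1)
    (hj : P a j = 1) : i = j := by
  by_contra hij
  have hle : P a i + P a j ≤ ∑ b, P a b :=
    Finset.add_le_sum (fun b _ => hP.nonneg a b) (Finset.mem_univ i) (Finset.mem_univ j) hij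
  rw [hi, hj, hP.2.1 a] at hle
  norm_num at hle

theorem submatrix_swap_ne (hP : IsPermMatrix P) {i j : Fin n} (hij : i ≠ j) :
    P.submatrix id (Equiv.swap i j) ≠ P := by
  intro hswap
  obtain ⟨a, ha⟩ := hP.exists_apply_eq_one i
  have haj : P a j = 1 := by
    simpa [ha] using congr_fun (congr_fun hswap a) i
  exact hij (hP.eq_of_apply_eq_one ha haj)

end IsPermMatrix

/-- If there is a unique permutation matrix minimising ‖Π F_X − F_Y‖_F² over all
permutation matrices, then F_X has pairwise distinct rows. -/
theorem stmt0 {n c : ℕ} (FX FY : Matrix (Fin n) (Fin c) ℝ)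
    (h : ∃! Pmat : Matrix (Fin n) (Fin n) ℝ, IsPermMatrix Pmat ∧
      ∀ Q : Matrix (Fin n) (Fin n) ℝ, IsPermMatrix Q →
        frobSq (Pmat * FX - FY) ≤ frobSq (Q * FX - FY)) :
    ∀ i j : Fin n, i ≠ j → FX i ≠ FX j := by
  intro i j hij hrows
  obtain ⟨P, ⟨hP, hmin⟩, huniq⟩ := h
  have hprod : P.submatrix id (Equiv.swap i j) * FX = P * FX := by
    conv_lhs => rw [← FX.submatrix_swap_self_of_row_eq hrows]
    rw [submatrix_mul_equiv, submatrix_id_id]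
  have hswap_min : IsPermMatrix (P.submatrix id (Equiv.swap i j)) ∧
      ∀ Q, IsPermMatrix Q →
        frobSq (P.submatrix id (Equiv.swap i j) * FX - FY) ≤ frobSq (Q * FX - FY) :=
    ⟨hP.submatrix_id _, fun Q hQ => hprod ▸ hmin Q hQ⟩
  exact hP.submatrix_swap_ne hij (huniq _ hswap_min)
end

section
/- Let F_X and F_Y be real n×c matrices. If there exists a unique permutation matrix Π minimising the Frobenius objective ‖Π F_X − F_Y‖_F² over all n×n permutation matrices, then F_Y has pairwise distinct rows. -/
open Matrix BigOperators

/-!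
If rows `i ≠ j` of `F_Y` coincide and `Π` is a minimiser, then swapping rows `i` and `j` of `Π`
permutes the rows of `Π F_X` and fixes `F_Y`, so it does not change the objective and gives
another minimiser. A permutation matrix has distinct rows, so this second minimiser differs
from `Π`, contradicting uniqueness.
-/

theorem frobSq_submatrix_equiv {m c : ℕ} (M : Matrix (Fin m) (Fin c) ℝ)
    (σ : Equiv.Perm (Fin m)) (τ : Equiv.Perm (Fin c)) :
    frobSq (M.submatrix σ τ) = frobSq M := by
  unfold frobSq
  exact Fintype.sum_equiv σ _ _ fun i => Fintype.sum_equiv τ _ _ fun j => rfl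

namespace IsPermMatrix

variable {n : ℕ} {P : Matrix (Fin n) (Fin n) ℝ}

theorem submatrix_equiv (hP : IsPermMatrix P) (σ τ : Equiv.Perm (Fin n)) :
    IsPermMatrix (P.submatrix σ τ) :=
  ⟨fun i j => hP.1 (σ i) (τ j),
    fun i => (Fintype.sum_equiv τ _ _ fun _ => rfl).trans (hP.2.1 (σ i)),
    fun j => (Fintype.sum_equiv σ _ _ fun _ => rfl).trans (hP.2.2 (τ j))⟩

theorem exists_eq_one (hP : IsPermMatrix P) (i : Fin n) : ∃ j, P i j = 1 := by
  by_contra! hne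
  have hzero : ∑ j, P i j = 0 :=
    Finset.sum_eq_zero fun j _ => (hP.1 i j).resolve_right (hne j)
  simp [hP.2.1 i] at hzero

theorem injective (hP : IsPermMatrix P) : Function.Injective P := by
  intro i j hrow
  by_contra hij
  obtain ⟨l, hl⟩ := hP.exists_eq_one i
  have hjl : P j l = 1 := by rw [← hrow, hl]
  have hcol : ∑ k ∈ {i, j}, P k l ≤ ∑ k, P k l :=
    Finset.sum_le_sum_of_subset_of_nonneg (Finset.subset_univ _)
      fun k _ _ => by rcases hP.1 k l with h | h <;> simp [h]
  rw [Finset.sum_pair hij, hl, hjl, hP.2.2 l] at hcol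
  norm_num at hcol

end IsPermMatrix

theorem submatrix_swap_eq_self {m ι α : Type*} [DecidableEq m] (M : Matrix m ι α) {i j : m}
    (hij : M i = M j) : M.submatrix (Equiv.swap i j) id = M := by
  ext k l
  rcases eq_or_ne k i with rfl | hki
  · simp [hij]
  rcases eq_or_ne k j with rfl | hkj
  · simp [hij]
  · simp [Equiv.swap_apply_of_ne_of_ne hki hkj]

/-- If there is a unique permutation matrix minimising ‖Π F_X − F_Y‖_F² over all
permutation matrices, then F_Y has pairwise distinct rows. -/
theorem stmt1 {n c : ℕ} (FX FY : Matrix (Fin n) (Fin c) ℝ)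
    (h : ∃! Pmat : Matrix (Fin n) (Fin n) ℝ, IsPermMatrix Pmat ∧
      ∀ Q : Matrix (Fin n) (Fin n) ℝ, IsPermMatrix Q →
        frobSq (Pmat * FX - FY) ≤ frobSq (Q * FX - FY)) :
    ∀ i j : Fin n, i ≠ j → FY i ≠ FY j := by
  intro i j hij hrow
  obtain ⟨P, ⟨hP, hPmin⟩, huniq⟩ := h
  set σ := Equiv.swap i j
  have hobj : frobSq (P.submatrix σ id * FX - FY) = frobSq (P * FX - FY) := by
    have hsub : P.submatrix σ id * FX - FY = (P * FX - FY).submatrix σ (Equiv.refl _) := by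
      conv_lhs => rw [← submatrix_swap_eq_self FY hrow]
      rfl
    rw [hsub, frobSq_submatrix_equiv]
  have hswap : P.submatrix σ id = P :=
    huniq _ ⟨hP.submatrix_equiv σ (Equiv.refl _), fun Q hQ => hobj ▸ hPmin Q hQ⟩
  have hPij : P (σ j) = P j := congrFun hswap j
  rw [Equiv.swap_apply_right] at hPij
  exact hij (hP.injective hPij)
end

section
/- Let Φ_X be a real n_X×k matrix, Φ_Y a real n_Y×k matrix, and Φ_Y† a real k×n_Y matrix with Φ_Y† Φ_Y = I_k. Let A_X and A_Y be real k×c matrices with k ≤ c, where A_X has rank k, and let Π be a real n_Y×n_X matrix such that Π (Φ_X A_X) = Φ_Y A_Y. Then every global minimiser C of the energy C ↦ ‖C A_X − A_Y‖_F² over real k×k matrices equals C^Π := Φ_Y† Π Φ_X, and the minimum value satisfies ‖C A_X − A_Y‖_F² = 0. -/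
open Matrix BigOperators

/-!
`C^Π` fits the descriptors exactly, since `Φ_Y† Π Φ_X A_X = Φ_Y† Φ_Y A_Y = A_Y`, so the minimum
of the energy is `0` and every minimiser `C` satisfies `C A_X = A_Y = C^Π A_X`. The rows of `A_X`
are linearly independent because it has full row rank, so `C ↦ C A_X` is injective and `C = C^Π`.
-/

theorem Matrix.mul_left_cancel_of_rank_eq_card {K l m n : Type*} [Field K] [Fintype m]
    [Fintype n] {A : Matrix m n K} (hA : A.rank = Fintype.card m) {C D : Matrix l m K}
    (h : C * A = D * A) : C = D := by
  have hrows : LinearIndependent K A.row := by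
    rw [linearIndependent_iff_card_eq_finrank_span, ← hA, rank_eq_finrank_span_row]
    rfl
  ext i j
  exact congrFun (vecMul_injective_iff.mpr hrows (congrFun h i)) j

lemma frobSq_nonneg {m c : ℕ} (M : Matrix (Fin m) (Fin c) ℝ) : 0 ≤ frobSq M :=
  Finset.sum_nonneg fun _ _ => Finset.sum_nonneg fun _ _ => sq_nonneg _

lemma frobSq_eq_zero_iff {m c : ℕ} {M : Matrix (Fin m) (Fin c) ℝ} : frobSq M = 0 ↔ M = 0 := by
  simp [frobSq, Finset.sum_eq_zero_iff_of_nonneg, Finset.sum_nonneg, sq_nonneg, ← Matrix.ext_iff]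

theorem stmt12_general {nX nY k c : ℕ}
    (ΦX : Matrix (Fin nX) (Fin k) ℝ) (ΦY : Matrix (Fin nY) (Fin k) ℝ)
    (ΦYd : Matrix (Fin k) (Fin nY) ℝ)
    (hleft : ΦYd * ΦY = (1 : Matrix (Fin k) (Fin k) ℝ))
    (AX AY : Matrix (Fin k) (Fin c) ℝ) (hrank : AX.rank = k)
    (Pm : Matrix (Fin nY) (Fin nX) ℝ)
    (hPm : Pm * (ΦX * AX) = ΦY * AY) :
    ∀ C : Matrix (Fin k) (Fin k) ℝ,
      (∀ C' : Matrix (Fin k) (Fin k) ℝ,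
        frobSq (C * AX - AY) ≤ frobSq (C' * AX - AY)) →
      C = ΦYd * Pm * ΦX ∧ frobSq (C * AX - AY) = 0 := by
  intro C hmin
  have hfit : ΦYd * Pm * ΦX * AX = AY := by
    rw [Matrix.mul_assoc, Matrix.mul_assoc, hPm, ← Matrix.mul_assoc, hleft, Matrix.one_mul]
  have hzero : frobSq (C * AX - AY) = 0 := by
    refine le_antisymm ?_ (frobSq_nonneg _)
    simpa [hfit, frobSq] using hmin (ΦYd * Pm * ΦX)
  have hC : C * AX = ΦYd * Pm * ΦX * AX := by
    rw [hfit, ← sub_eq_zero, ← frobSq_eq_zero_iff, hzero]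
  exact ⟨mul_left_cancel_of_rank_eq_card (by rw [hrank, Fintype.card_fin]) hC, hzero⟩

/-- Theorem 4.2: if `Φ_Y† Φ_Y = I`, `A_X` (k×c, k ≤ c) has full rank `k`, and the
point-wise map `Π` satisfies `Π (Φ_X A_X) = Φ_Y A_Y`, then every global minimiser
`C` of `C ↦ ‖C A_X − A_Y‖_F²` equals `C^Π = Φ_Y† Π Φ_X`, and the minimum value is 0. -/
theorem stmt12 {nX nY k c : ℕ} (hkc : k ≤ c)
    (ΦX : Matrix (Fin nX) (Fin k) ℝ) (ΦY : Matrix (Fin nY) (Fin k) ℝ)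
    (ΦYd : Matrix (Fin k) (Fin nY) ℝ)
    (hleft : ΦYd * ΦY = (1 : Matrix (Fin k) (Fin k) ℝ))
    (AX AY : Matrix (Fin k) (Fin c) ℝ) (hrank : AX.rank = k)
    (Pm : Matrix (Fin nY) (Fin nX) ℝ)
    (hPm : Pm * (ΦX * AX) = ΦY * AY) :
    ∀ C : Matrix (Fin k) (Fin k) ℝ,
      (∀ C' : Matrix (Fin k) (Fin k) ℝ,
        frobSq (C * AX - AY) ≤ frobSq (C' * AX - AY)) →
      C = ΦYd * Pm * ΦX ∧ frobSq (C * AX - AY) = 0 :=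
  stmt12_general ΦX ΦY ΦYd hleft AX AY hrank Pm hPm
end
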